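/- Let Z/4 × Z/4 act on C² × C² coordinatewise, where Z/4 acts on C² by (z,w) ↦ (i·z, −w). Let V = {((0,w),(0,w)) : w ∈ C} and let Λ = {(γ,γ) : γ ∈ Z/4} be the diagonal subgroup. Then V is Λ-invariant, Ω = {γ ∈ Λ : γ|_V = id} has order 2, and the induced exact sequence 1 → Ω → Λ → Λ/Ω → 1, i.e. 1 → Z/2 → Z/4 → Z/2 → 1, does not split. -/

import Mathlib

/-- The `ℤ/4`-action on `ℂ²`: `k` acts by `(z,w) ↦ (i^k z, (-1)^k w)`. -/
def z4Act (k : ZMod 4) (p : ℂ × ℂ) : ℂ × ℂ :=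
  (Complex.I ^ k.val * p.1, (-1 : ℂ) ^ k.val * p.2)

/-! On the axis `{(0, w)}` the generator acts by `w ↦ -w`, so `V` is invariant and `k` fixes it
pointwise exactly when `k` is even. A section `σ` of `ℤ/n² → ℤ/n` would make `σ 1` an element
killed by `n`, hence a multiple of `n`, which reduces to `0` rather than `1`. -/

theorem z4Act_zero_fst (k : ZMod 4) (w : ℂ) : z4Act k (0, w) = (0, (-1) ^ k.val * w) := by
  simp [z4Act]

theorem z4Act_fixes_axis_iff (k : ZMod 4) : (∀ w : ℂ, z4Act k (0, w) = (0, w)) ↔ Even k.val := by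
  simp only [z4Act_zero_fst, Prod.mk.injEq, true_and]
  rw [← neg_one_pow_eq_one_iff_even (R := ℂ) (by norm_num)]
  exact ⟨fun h => by simpa using h 1, fun h w => by rw [h, one_mul]⟩

theorem ZMod.setOf_even_val_four : {k : ZMod 4 | Even k.val} = {0, 2} := by
  ext k
  simp only [Set.mem_ofPred_eq, Set.mem_insert_iff, Set.mem_singleton_iff]
  revert k
  decide

theorem ZMod.castHom_mul_self_eq_zero_of_nsmul_eq_zero {n : ℕ} (hn : 0 < n) {a : ZMod (n * n)}
    (ha : n • a = 0) : ZMod.castHom (dvd_mul_right n n) (ZMod n) a = 0 := by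
  have : NeZero (n * n) := ⟨(Nat.mul_pos hn hn).ne'⟩
  rw [← ZMod.natCast_zmod_val a, nsmul_eq_mul, ← Nat.cast_mul, ZMod.natCast_eq_zero_iff] at ha
  rw [← ZMod.natCast_zmod_val a, map_natCast, ZMod.natCast_eq_zero_iff]
  exact Nat.dvd_of_mul_dvd_mul_left hn ha

theorem ZMod.not_exists_addMonoidHom_section_castHom_mul_self {n : ℕ} (hn : 1 < n) :
    ¬ ∃ σ : ZMod n →+ ZMod (n * n),
      ∀ x : ZMod n, ZMod.castHom (dvd_mul_right n n) (ZMod n) (σ x) = x := by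
  rintro ⟨σ, hσ⟩
  have : Fact (1 < n) := ⟨hn⟩
  have hσ1 : n • σ 1 = 0 := by
    rw [← map_nsmul, nsmul_eq_mul, mul_one, ZMod.natCast_self, map_zero]
  have h1 := hσ 1
  rw [ZMod.castHom_mul_self_eq_zero_of_nsmul_eq_zero (by omega) hσ1] at h1
  exact zero_ne_one h1

/-- For the coordinatewise action of `ℤ/4 × ℤ/4` on `ℂ² × ℂ²`, the diagonal
`V = {((0,w),(0,w))}` is invariant under the diagonal subgroup `Λ = {(γ,γ)}`,
the subgroup `Ω = {γ ∈ Λ : γ|_V = id}` has order 2 (it is `{0,2} ⊂ ℤ/4`), and the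
induced exact sequence `1 → Ω → Λ → Λ/Ω → 1`, i.e. `1 → ℤ/2 → ℤ/4 → ℤ/2 → 1`,
does not split. -/
theorem diagonal_of_nonsplit_suborbifold :
    (∀ (k : ZMod 4) (w : ℂ), ∃ w' : ℂ,
      (z4Act k (0, w), z4Act k (0, w)) = (((0 : ℂ), w'), ((0 : ℂ), w'))) ∧
    ({k : ZMod 4 | ∀ w : ℂ, (z4Act k (0, w), z4Act k (0, w)) = ((0, w), (0, w))}
      = {0, 2}) ∧
    ¬ ∃ σ : ZMod 2 →+ ZMod 4,
      ∀ x : ZMod 2, (ZMod.castHom (by norm_num : (2 : ℕ) ∣ 4) (ZMod 2)) (σ x) = x := by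
  refine ⟨fun k w => ⟨_, by rw [z4Act_zero_fst]⟩, ?_,
    ZMod.not_exists_addMonoidHom_section_castHom_mul_self one_lt_two⟩
  simp only [Prod.mk.injEq, and_self, z4Act_fixes_axis_iff, ZMod.setOf_even_val_four]
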